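/- Let n ≥ 3. In the 1-skeleton of the explicit stacked sphere Δ_{2n+2} (a graph on vertex set {1, …, 3n+2}), any two vertices i, j with |i - j| ≥ 2n+1 have graph distance at least 3. In particular, both systems of pairs {(1, 2n+3), (2, 2n+4), …, (n-1, 3n+1), (n, 3n+2)} and {(1, 2n+3), (2, 2n+4), …, (n-1, 3n+2), (n, 3n+1)} consist of pairs at distance at least 3, so each may be identified to form an identified stacked sphere. -/
import Mathlib


/-- The facets of the explicit stacked sphere `Δ_m` on vertex set `{1, …, n+m}`:
`Δ_1` consists of all `n`-element subsets of `{1, …, n+1}`, and `Δ_{i+1}` is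
obtained from `Δ_i` by subdividing the facet `{i+1, …, n+i}` at the new vertex
`n+i+1`. -/
def Delta (n : ℕ) : ℕ → Finset (Finset ℕ)
  | 0 => ∅
  | 1 => (Finset.Icc 1 (n + 1)).powersetCard n
  | (m + 2) =>
      ((Delta n (m + 1)).erase (Finset.Icc (m + 2) (n + m + 1))) ∪
        (Finset.Icc (m + 2) (n + m + 1)).image
          (fun t => insert (n + m + 2) ((Finset.Icc (m + 2) (n + m + 1)).erase t))

/-- The 1-skeleton of `Δ_m`: two distinct vertices are adjacent iff they lie in
a common facet of `Δ_m`. -/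
def deltaSkeleton (n m : ℕ) : SimpleGraph ℕ :=
  SimpleGraph.fromRel (fun a b => ∃ F ∈ Delta n m, a ∈ F ∧ b ∈ F)

-- diameter lemma
lemma delta_diam (n : ℕ) : ∀ m, ∀ F ∈ Delta n m, ∀ a ∈ F, ∀ b ∈ F, a ≤ b → b ≤ a + n := by
  intro m
  induction m using Nat.strong_induction_on with
  | _ m ih =>
    match m with
    | 0 => intro F hF; simp [Delta] at hF
    | 1 =>
      intro F hF a ha b hb hab
      rw [Delta, Finset.mem_powersetCard] at hF
      have h1 := hF.1 ha
      have h2 := hF.1 hb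
      simp [Finset.mem_Icc] at h1 h2
      omega
    | (m+2) =>
      intro F hF a ha b hb hab
      rw [Delta] at hF
      rcases Finset.mem_union.1 hF with h1 | h2
      · exact ih (m+1) (by omega) F (Finset.mem_of_mem_erase h1) a ha b hb hab
      · obtain ⟨t, ht, rfl⟩ := Finset.mem_image.1 h2
        have key : ∀ x ∈ insert (n + m + 2) ((Finset.Icc (m + 2) (n + m + 1)).erase t),
            m + 2 ≤ x ∧ x ≤ n + m + 2 := by
          intro x hx
          rcases Finset.mem_insert.1 hx with rfl | hx
          · omega
          · have := Finset.mem_of_mem_erase hx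
            simp [Finset.mem_Icc] at this; omega
        have := key a ha
        have := key b hb
        omega

lemma persist (n : ℕ) : ∀ k, 1 ≤ k → ∀ K, k ≤ K → ∀ F ∈ Delta n k, (∃ x ∈ F, x ≤ k) → F ∈ Delta n K := by
  intro k hk K hK
  induction K, hK using Nat.le_induction with
  | base => intro F hF _; exact hF
  | succ K hkK ih =>
    intro F hF hx
    have hF' := ih F hF hx
    have hK1 : 1 ≤ K := le_trans hk hkK
    obtain ⟨m, rfl⟩ : ∃ m, K = m + 1 := ⟨K - 1, by omega⟩
    rw [show m + 1 + 1 = m + 2 from rfl, Delta]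
    apply Finset.mem_union_left
    rw [Finset.mem_erase]
    refine ⟨?_, hF'⟩
    obtain ⟨x, hxF, hxk⟩ := hx
    intro hEq
    rw [hEq] at hxF
    simp [Finset.mem_Icc] at hxF
    omega

lemma adj_of_facet {n m a b : ℕ} (hab : a ≠ b) {F : Finset ℕ} (hF : F ∈ Delta n m)
    (ha : a ∈ F) (hb : b ∈ F) : (deltaSkeleton n m).Adj a b := by
  simp only [deltaSkeleton, SimpleGraph.fromRel_adj]
  exact ⟨hab, Or.inl ⟨F, hF, ha, hb⟩⟩

lemma adj_bound {n m a b : ℕ} (h : (deltaSkeleton n m).Adj a b) :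
    ((a : ℤ) - b).natAbs ≤ n := by
  simp only [deltaSkeleton, SimpleGraph.fromRel_adj] at h
  obtain ⟨-, h | h⟩ := h <;> obtain ⟨F, hF, ha, hb⟩ := h
  · rcases le_total a b with hle | hle
    · have := delta_diam n m F hF a ha b hb hle; omega
    · have := delta_diam n m F hF b hb a ha hle; omega
  · rcases le_total a b with hle | hle
    · have := delta_diam n m F hF a hb b ha hle; omega
    · have := delta_diam n m F hF b ha a hb hle; omega

lemma adj_consec (n : ℕ) (hn : 3 ≤ n) (M : ℕ) (hM : 1 ≤ M) (a : ℕ) (ha1 : 1 ≤ a)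
    (ha2 : a + 1 ≤ n + M) : (deltaSkeleton n M).Adj a (a + 1) := by
  rcases le_or_gt a n with hle | hlt
  · -- facet (Icc 1 (n+1)).erase c
    set c : ℕ := if a = n then 2 else n + 1 with hc
    have hc2 : 2 ≤ c ∧ c ≤ n + 1 ∧ c ≠ a ∧ c ≠ a + 1 := by
      rcases eq_or_ne a n with rfl | hne
      · simp [hc]; omega
      · simp [hc, hne]; omega
    have hcmem : c ∈ Finset.Icc 1 (n + 1) := by simp [Finset.mem_Icc]; omega
    have hF1 : (Finset.Icc 1 (n + 1)).erase c ∈ Delta n 1 := by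
      rw [Delta, Finset.mem_powersetCard]
      constructor
      · exact Finset.erase_subset _ _
      · rw [Finset.card_erase_of_mem hcmem, Nat.card_Icc]; omega
    have h1mem : (1 : ℕ) ∈ (Finset.Icc 1 (n + 1)).erase c := by
      rw [Finset.mem_erase]; constructor; · omega
      simp [Finset.mem_Icc]
    have hFM : (Finset.Icc 1 (n + 1)).erase c ∈ Delta n M :=
      persist n 1 le_rfl M hM _ hF1 ⟨1, h1mem, le_rfl⟩
    refine adj_of_facet (by omega) hFM ?_ ?_ <;>
      · rw [Finset.mem_erase]; simp [Finset.mem_Icc]; omega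
  · -- a = n + m + 1
    obtain ⟨m, rfl⟩ : ∃ m, a = n + m + 1 := ⟨a - n - 1, by omega⟩
    have hmM : m + 2 ≤ M := by omega
    set F : Finset ℕ := insert (n + m + 2) ((Finset.Icc (m + 2) (n + m + 1)).erase (m + 3)) with hFdef
    have hF2 : F ∈ Delta n (m + 2) := by
      rw [Delta]
      apply Finset.mem_union_right
      rw [Finset.mem_image]
      exact ⟨m + 3, by simp [Finset.mem_Icc]; omega, rfl⟩
    have hxF : m + 2 ∈ F := by
      rw [hFdef, Finset.mem_insert]
      right; rw [Finset.mem_erase]; simp [Finset.mem_Icc]; omega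
    have hFM : F ∈ Delta n M := persist n (m + 2) (by omega) M hmM F hF2 ⟨m + 2, hxF, le_rfl⟩
    refine adj_of_facet (by omega) hFM ?_ ?_
    · rw [hFdef, Finset.mem_insert]
      right; rw [Finset.mem_erase]; simp [Finset.mem_Icc]; omega
    · rw [hFdef]; exact Finset.mem_insert_self _ _

lemma reach_one (n : ℕ) (hn : 3 ≤ n) (M : ℕ) (hM : 1 ≤ M) :
    ∀ a, 1 ≤ a → a ≤ n + M → (deltaSkeleton n M).Reachable 1 a := by
  intro a
  induction a with
  | zero => omega
  | succ a ih =>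
    intro h1 h2
    rcases Nat.eq_or_lt_of_le h1 with h | h
    · rw [← h]
    · have hr := ih (by omega) (by omega)
      exact hr.trans (adj_consec n hn M hM a (by omega) h2).reachable

lemma walk_bound {n m : ℕ} : ∀ {a b : ℕ} (p : (deltaSkeleton n m).Walk a b),
    ((a : ℤ) - b).natAbs ≤ n * p.length := by
  intro a b p
  induction p with
  | nil => simp
  | @cons u v w h p ih =>
    have h1 := adj_bound h
    simp only [SimpleGraph.Walk.length_cons]
    have : ((u : ℤ) - w).natAbs ≤ ((u:ℤ) - v).natAbs + ((v:ℤ) - w).natAbs := by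
      have := abs_sub_abs_le_abs_sub ((u:ℤ) - v) 0
      omega
    calc ((u : ℤ) - w).natAbs ≤ ((u:ℤ) - v).natAbs + ((v:ℤ) - w).natAbs := this
      _ ≤ n + n * p.length := by omega
      _ = n * (p.length + 1) := by ring

/-- in the 1-skeleton of `Δ_{2n+2}` (vertex set `{1, …, 3n+2}`),
any two vertices `i, j` with `|i - j| ≥ 2n+1` have graph distance at least 3
(so each of the two systems of pairs described in the paper may be identified
to form an identified stacked sphere). -/
theorem delta_dist_ge_three (n : ℕ) (hn : 3 ≤ n) (i j : ℕ)
    (hi : i ∈ Finset.Icc 1 (3 * n + 2)) (hj : j ∈ Finset.Icc 1 (3 * n + 2))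
    (h : 2 * n + 1 ≤ ((i : ℤ) - (j : ℤ)).natAbs) :
    3 ≤ (deltaSkeleton n (2 * n + 2)).dist i j := by
  simp [Finset.mem_Icc] at hi hj
  have hM : 1 ≤ 2 * n + 2 := by omega
  have hri : (deltaSkeleton n (2*n+2)).Reachable 1 i :=
    reach_one n hn _ hM i hi.1 (by omega)
  have hrj : (deltaSkeleton n (2*n+2)).Reachable 1 j :=
    reach_one n hn _ hM j hj.1 (by omega)
  have hr : (deltaSkeleton n (2*n+2)).Reachable i j := hri.symm.trans hrj
  obtain ⟨p, hp⟩ := hr.exists_walk_length_eq_dist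
  have hb := walk_bound p
  rw [hp] at hb
  by_contra h3
  push_neg at h3
  have : n * (deltaSkeleton n (2*n+2)).dist i j ≤ n * 2 :=
    Nat.mul_le_mul_left n (by omega)
  omega
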